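/- arXiv:math/0701046 — 3 statements merged into one kernel-verified Lean document; each statement's English description precedes it below -/
import Mathlib

section
/- If two labeled triangles {l,m,n} and {l',m',n'} in P²(ℂ) are perspective from a line l'' via the permutation sending (l,m,n) to (l',n',m') and perspective from a line m'' via the permutation sending (l,m,n) to (m',l',n'), then they are also perspective from some line n'' via the permutation sending (l,m,n) to (n',m',l'); that is, the points l∩n', m∩m', n∩l' are collinear. -/
/-- The complex projective plane, as the projectivization of `ℂ³`. By duality, lines in the
plane are also represented by elements of `P2` (their coefficient vectors up to scale). -/
noncomputable abbrev P2 := Projectivization ℂ (Fin 3 → ℂ)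

/-- The standard bilinear pairing between a point and a line of `P2`. -/
def dotP (v w : Fin 3 → ℂ) : ℂ := v 0 * w 0 + v 1 * w 1 + v 2 * w 2

/-- Incidence: the point `p` lies on the line `l` (both as elements of `P2`, the line via
its coefficient vector in the dual plane). -/
def PMem (p l : P2) : Prop := dotP p.rep l.rep = 0

/-- Three lines of `P2` are concurrent if some point lies on all three. -/
def Concurrent (l₁ l₂ l₃ : P2) : Prop := ∃ p : P2, PMem p l₁ ∧ PMem p l₂ ∧ PMem p l₃

/-- Three points of `P2` are collinear if some line contains all three. -/
def Collin (p q r : P2) : Prop := ∃ l : P2, PMem p l ∧ PMem q l ∧ PMem r l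

/-- A `(k,d)`-net of lines in `P2`, the classes being indexed by `Fin k` and the lines of
each class by `ι`: the `k·d` lines are distinct, and every intersection point of two lines
from distinct classes lies on exactly one line of each class. -/
def IsNetLines {k : ℕ} {ι : Type*} (ℓ : Fin k → ι → P2) : Prop :=
  Function.Injective (fun x : Fin k × ι => ℓ x.1 x.2) ∧
  ∀ i j : Fin k, i ≠ j → ∀ (a b : ι) (p : P2), PMem p (ℓ i a) → PMem p (ℓ j b) →
    ∀ m : Fin k, ∃! c : ι, PMem p (ℓ m c)

/-! ### Auxiliary material: cross products and 3×3 determinants in `ℂ³`. -/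

/-- The cross product on `ℂ³`. -/
def crP (a b : Fin 3 → ℂ) : Fin 3 → ℂ :=
  ![a 1 * b 2 - a 2 * b 1, a 2 * b 0 - a 0 * b 2, a 0 * b 1 - a 1 * b 0]

/-- Explicit 3×3 determinant of three row vectors. -/
def det3 (u v w : Fin 3 → ℂ) : ℂ :=
  u 0 * (v 1 * w 2 - v 2 * w 1) - u 1 * (v 0 * w 2 - v 2 * w 0) + u 2 * (v 0 * w 1 - v 1 * w 0)

lemma vec_ne_zero_iff (w : Fin 3 → ℂ) : w ≠ 0 ↔ w 0 ≠ 0 ∨ w 1 ≠ 0 ∨ w 2 ≠ 0 := by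
  constructor
  · intro h
    by_contra hc
    push_neg at hc
    exact h (funext fun i => by fin_cases i <;> simp [hc.1, hc.2.1, hc.2.2])
  · rintro (h | h | h) rfl <;> simp at h

lemma smul_of_comps {u w : Fin 3 → ℂ} (c : ℂ) (h0 : u 0 = c * w 0) (h1 : u 1 = c * w 1)
    (h2 : u 2 = c * w 2) : u = c • w := by
  funext i; fin_cases i <;> simpa [Pi.smul_apply]

lemma crP_eq_zero_imp {u w : Fin 3 → ℂ} (h : crP u w = 0) (hw : w ≠ 0) :
    ∃ c : ℂ, u = c • w := by
  have h0 : u 1 * w 2 - u 2 * w 1 = 0 := congrFun h 0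
  have h1 : u 2 * w 0 - u 0 * w 2 = 0 := congrFun h 1
  have h2 : u 0 * w 1 - u 1 * w 0 = 0 := congrFun h 2
  rcases (vec_ne_zero_iff w).1 hw with hk | hk | hk
  · refine ⟨u 0 / w 0, smul_of_comps _ ?_ ?_ ?_⟩ <;> field_simp
    · linear_combination -h2
    · linear_combination h1
  · refine ⟨u 1 / w 1, smul_of_comps _ ?_ ?_ ?_⟩ <;> field_simp
    · linear_combination h2
    · linear_combination -h0
  · refine ⟨u 2 / w 2, smul_of_comps _ ?_ ?_ ?_⟩ <;> field_simp
    · linear_combination -h1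
    · linear_combination h0

lemma triple_cross {u a b : Fin 3 → ℂ} (ha : dotP u a = 0) (hb : dotP u b = 0) :
    crP u (crP a b) = 0 := by
  unfold dotP at ha hb
  funext i
  fin_cases i
  · show u 1 * (a 0 * b 1 - a 1 * b 0) - u 2 * (a 2 * b 0 - a 0 * b 2) = 0
    linear_combination a 0 * hb - b 0 * ha
  · show u 2 * (a 1 * b 2 - a 2 * b 1) - u 0 * (a 0 * b 1 - a 1 * b 0) = 0
    linear_combination a 1 * hb - b 1 * ha
  · show u 0 * (a 2 * b 0 - a 0 * b 2) - u 1 * (a 1 * b 2 - a 2 * b 1) = 0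
    linear_combination a 2 * hb - b 2 * ha

lemma det3_cross_identity (a0 a1 a2 b0 b1 b2 : Fin 3 → ℂ) :
    det3 (crP a0 b0) (crP a1 b2) (crP a2 b1) + det3 (crP a0 b1) (crP a1 b0) (crP a2 b2)
      + det3 (crP a0 b2) (crP a1 b1) (crP a2 b0) = 0 := by
  simp only [det3, crP, Matrix.cons_val_zero, Matrix.cons_val_one, Matrix.head_cons,
    Matrix.cons_val_two, Matrix.tail_cons]
  ring

lemma det3_eq_zero_iff (u v w : Fin 3 → ℂ) :
    det3 u v w = 0 ↔ ∃ x : Fin 3 → ℂ, x ≠ 0 ∧ dotP u x = 0 ∧ dotP v x = 0 ∧ dotP w x = 0 := by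
  have hdet : (Matrix.of ![u, v, w]).det = det3 u v w := by
    rw [Matrix.det_fin_three]
    simp only [Matrix.of_apply, Matrix.cons_val_zero, Matrix.cons_val_one, Matrix.head_cons,
      Matrix.cons_val_two, Matrix.tail_cons, det3]
    ring
  rw [← hdet, ← Matrix.exists_mulVec_eq_zero_iff]
  constructor
  · rintro ⟨x, hx, hmx⟩
    refine ⟨x, hx, ?_, ?_, ?_⟩ <;>
    · have h0 := congrFun hmx 0
      have h1 := congrFun hmx 1
      have h2 := congrFun hmx 2
      simp only [Matrix.mulVec, dotProduct, Fin.sum_univ_three, Matrix.of_apply,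
        Matrix.cons_val_zero, Matrix.cons_val_one, Matrix.head_cons, Matrix.cons_val_two,
        Matrix.tail_cons, Pi.zero_apply] at h0 h1 h2
      unfold dotP
      assumption
  · rintro ⟨x, hx, h0, h1, h2⟩
    refine ⟨x, hx, ?_⟩
    funext i
    fin_cases i <;>
      simp only [Matrix.mulVec, dotProduct, Fin.sum_univ_three, Matrix.of_apply,
        Matrix.cons_val_zero, Matrix.cons_val_one, Matrix.head_cons, Matrix.cons_val_two,
        Matrix.tail_cons, Pi.zero_apply, Fin.isValue] <;>
      [exact h0; exact h1; exact h2]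

lemma dotP_smul_left (c : ℂ) (v w : Fin 3 → ℂ) : dotP (c • v) w = c * dotP v w := by
  simp only [dotP, Pi.smul_apply, smul_eq_mul]; ring

lemma dotP_smul_right (c : ℂ) (v w : Fin 3 → ℂ) : dotP v (c • w) = c * dotP v w := by
  simp only [dotP, Pi.smul_apply, smul_eq_mul]; ring

/-- Axis of homology: if two triangles `T = {l, m, n}` and `T' = {l', m', n'}` (six distinct
lines) with nine distinct pairwise intersection points `p i j = T i ∩ T' j` are perspective
from a line `l''` via `(l,m,n) ↦ (l',n',m')` and from a line `m''` via
`(l,m,n) ↦ (m',l',n')`, then they are also perspective from some line `n''` via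
`(l,m,n) ↦ (n',m',l')`; that is, `l∩n'`, `m∩m'`, `n∩l'` are collinear. -/
theorem stmt13 (T T' : Fin 3 → P2)
    (hlines : Function.Injective (fun x : Fin 2 × Fin 3 => ![T, T'] x.1 x.2))
    (p : Fin 3 → Fin 3 → P2)
    (hp : ∀ i j, PMem (p i j) (T i) ∧ PMem (p i j) (T' j))
    (hdist : Function.Injective (fun x : Fin 3 × Fin 3 => p x.1 x.2))
    (hl'' : ∃ l'' : P2, PMem (p 0 0) l'' ∧ PMem (p 1 2) l'' ∧ PMem (p 2 1) l'')
    (hm'' : ∃ m'' : P2, PMem (p 0 1) m'' ∧ PMem (p 1 0) m'' ∧ PMem (p 2 2) m'') :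
    ∃ n'' : P2, PMem (p 0 2) n'' ∧ PMem (p 1 1) n'' ∧ PMem (p 2 0) n'' := by
  classical
  -- the six lines are pairwise distinct across the two triangles
  have hTT' : ∀ i j : Fin 3, T i ≠ T' j := by
    intro i j h
    have : ((0 : Fin 2), i) = ((1 : Fin 2), j) := hlines (by simpa using h)
    simp at this
  -- each intersection point is a nonzero multiple of the cross product of the two lines
  have key : ∀ i j : Fin 3, ∃ c : ℂ, c ≠ 0 ∧
      (p i j).rep = c • crP (T i).rep (T' j).rep := by
    intro i j
    have hcr : crP (T i).rep (T' j).rep ≠ 0 := by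
      intro h0
      obtain ⟨c, hc⟩ := crP_eq_zero_imp h0 (T' j).rep_nonzero
      exact hTT' i j (by
        rw [← (T i).mk_rep, ← (T' j).mk_rep]
        exact (Projectivization.mk_eq_mk_iff' ℂ _ _ (T i).rep_nonzero (T' j).rep_nonzero).2
          ⟨c, hc.symm⟩)
    obtain ⟨c, hc⟩ := crP_eq_zero_imp (triple_cross (hp i j).1 (hp i j).2) hcr
    refine ⟨c, ?_, hc⟩
    rintro rfl
    exact (p i j).rep_nonzero (by simpa using hc)
  obtain ⟨c00, hc00, e00⟩ := key 0 0
  obtain ⟨c01, hc01, e01⟩ := key 0 1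
  obtain ⟨c02, hc02, e02⟩ := key 0 2
  obtain ⟨c10, hc10, e10⟩ := key 1 0
  obtain ⟨c11, hc11, e11⟩ := key 1 1
  obtain ⟨c12, hc12, e12⟩ := key 1 2
  obtain ⟨c20, hc20, e20⟩ := key 2 0
  obtain ⟨c21, hc21, e21⟩ := key 2 1
  obtain ⟨c22, hc22, e22⟩ := key 2 2
  -- from a common transversal, the determinant of the three cross products vanishes
  have zero_of_mem : ∀ (x : Fin 3 → ℂ) (c : ℂ), c ≠ 0 →
      ∀ v w : Fin 3 → ℂ, v = c • w → dotP v x = 0 → dotP w x = 0 := by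
    intro x c hc v w hvw h
    rw [hvw, dotP_smul_left] at h
    exact (mul_eq_zero.1 h).resolve_left hc
  have D1 : det3 (crP (T 0).rep (T' 0).rep) (crP (T 1).rep (T' 2).rep)
      (crP (T 2).rep (T' 1).rep) = 0 := by
    obtain ⟨l'', h1, h2, h3⟩ := hl''
    exact (det3_eq_zero_iff _ _ _).2 ⟨l''.rep, l''.rep_nonzero,
      zero_of_mem _ _ hc00 _ _ e00 h1, zero_of_mem _ _ hc12 _ _ e12 h2,
      zero_of_mem _ _ hc21 _ _ e21 h3⟩
  have D2 : det3 (crP (T 0).rep (T' 1).rep) (crP (T 1).rep (T' 0).rep)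
      (crP (T 2).rep (T' 2).rep) = 0 := by
    obtain ⟨m'', h1, h2, h3⟩ := hm''
    exact (det3_eq_zero_iff _ _ _).2 ⟨m''.rep, m''.rep_nonzero,
      zero_of_mem _ _ hc01 _ _ e01 h1, zero_of_mem _ _ hc10 _ _ e10 h2,
      zero_of_mem _ _ hc22 _ _ e22 h3⟩
  have D3 : det3 (crP (T 0).rep (T' 2).rep) (crP (T 1).rep (T' 1).rep)
      (crP (T 2).rep (T' 0).rep) = 0 := by
    have := det3_cross_identity (T 0).rep (T 1).rep (T 2).rep (T' 0).rep (T' 1).rep (T' 2).rep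
    linear_combination this - D1 - D2
  obtain ⟨x, hx, d1, d2, d3⟩ := (det3_eq_zero_iff _ _ _).1 D3
  refine ⟨Projectivization.mk ℂ x hx, ?_, ?_, ?_⟩ <;> unfold PMem
  · obtain ⟨a, ha⟩ := Projectivization.exists_smul_eq_mk_rep ℂ x hx
    rw [e02, ← ha, Units.smul_def, dotP_smul_left, dotP_smul_right, d1]; ring
  · obtain ⟨a, ha⟩ := Projectivization.exists_smul_eq_mk_rep ℂ x hx
    rw [e11, ← ha, Units.smul_def, dotP_smul_left, dotP_smul_right, d2]; ring
  · obtain ⟨a, ha⟩ := Projectivization.exists_smul_eq_mk_rep ℂ x hx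
    rw [e20, ← ha, Units.smul_def, dotP_smul_left, dotP_smul_right, d3]; ring
end

section
/- The twelve lines l_{11}=[1:0:0], l_{12}=[0:1:0], l_{13}=[0:0:1], l_{21}=[1:1:1], l_{22}=[1:ω:ω²], l_{23}=[1:ω²:ω], l_{31}=[ω:1:1], l_{32}=[1:ω:1], l_{33}=[1:1:ω], l_{41}=[ω²:1:1], l_{42}=[1:ω²:1], l_{43}=[1:1:ω²], where ω is a primitive cube root of unity, form a (4,3)-net in P²(ℂ). -/
/-- The coefficient vectors of the twelve lines of the Hesse `(4,3)`-net, in terms of a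
primitive cube root of unity `ω`. -/
def hesseLines (ω : ℂ) : Fin 4 → Fin 3 → (Fin 3 → ℂ) :=
  ![![![1, 0, 0], ![0, 1, 0], ![0, 0, 1]],
    ![![1, 1, 1], ![1, ω, ω ^ 2], ![1, ω ^ 2, ω]],
    ![![ω, 1, 1], ![1, ω, 1], ![1, 1, ω]],
    ![![ω ^ 2, 1, 1], ![1, ω ^ 2, 1], ![1, 1, ω ^ 2]]]

/- ## Auxiliary development -/

/-- multiplication in ℤ[ω] with ω² = -1-ω, coded on ℤ×ℤ -/
def zmul (x y : ℤ × ℤ) : ℤ × ℤ :=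
  (x.1 * y.1 - x.2 * y.2, x.1 * y.2 + x.2 * y.1 - x.2 * y.2)

def dotZ (u v : Fin 3 → ℤ × ℤ) : ℤ × ℤ :=
  zmul (u 0) (v 0) + zmul (u 1) (v 1) + zmul (u 2) (v 2)

def crossZ (u v : Fin 3 → ℤ × ℤ) : Fin 3 → ℤ × ℤ :=
  ![zmul (u 1) (v 2) - zmul (u 2) (v 1),
    zmul (u 2) (v 0) - zmul (u 0) (v 2),
    zmul (u 0) (v 1) - zmul (u 1) (v 0)]

def LZ : Fin 4 → Fin 3 → Fin 3 → ℤ × ℤ :=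
  ![![![(1,0), (0,0), (0,0)], ![(0,0), (1,0), (0,0)], ![(0,0), (0,0), (1,0)]],
    ![![(1,0), (1,0), (1,0)], ![(1,0), (0,1), (-1,-1)], ![(1,0), (-1,-1), (0,1)]],
    ![![(0,1), (1,0), (1,0)], ![(1,0), (0,1), (1,0)], ![(1,0), (1,0), (0,1)]],
    ![![(-1,-1), (1,0), (1,0)], ![(1,0), (-1,-1), (1,0)], ![(1,0), (1,0), (-1,-1)]]]

def ev (ω : ℂ) (x : ℤ × ℤ) : ℂ := x.1 + x.2 * ω

def evv (ω : ℂ) (x : Fin 3 → ℤ × ℤ) : Fin 3 → ℂ := fun k => ev ω (x k)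

def crossP (u v : Fin 3 → ℂ) : Fin 3 → ℂ :=
  ![u 1 * v 2 - u 2 * v 1, u 2 * v 0 - u 0 * v 2, u 0 * v 1 - u 1 * v 0]

section evlemmas
variable {ω : ℂ}

lemma ev_add (x y : ℤ × ℤ) : ev ω (x + y) = ev ω x + ev ω y := by
  simp [ev]; ring

lemma ev_sub (x y : ℤ × ℤ) : ev ω (x - y) = ev ω x - ev ω y := by
  simp [ev]; ring

lemma ev_mul (h : ω ^ 2 + ω + 1 = 0) (x y : ℤ × ℤ) : ev ω (zmul x y) = ev ω x * ev ω y := by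
  simp [ev, zmul]
  linear_combination (-(x.2 : ℂ) * y.2) * h

lemma ev_eq_zero (h : ω ^ 2 + ω + 1 = 0) (x : ℤ × ℤ) (hx : ev ω x = 0) : x = 0 := by
  simp only [ev] at hx
  have key : ((x.1 ^ 2 - x.1 * x.2 + x.2 ^ 2 : ℤ) : ℂ) = 0 := by
    push_cast
    linear_combination ((x.1 : ℂ) - x.2 - x.2 * ω) * hx + (x.2 : ℂ) ^ 2 * h
  have key2 : x.1 ^ 2 - x.1 * x.2 + x.2 ^ 2 = 0 := by exact_mod_cast key
  have h1 : x.1 = 0 := by nlinarith [sq_nonneg (x.1 + x.2), sq_nonneg (x.1 - x.2), sq_nonneg x.1, sq_nonneg x.2]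
  have h2 : x.2 = 0 := by nlinarith [sq_nonneg (x.1 + x.2), sq_nonneg (x.1 - x.2), sq_nonneg x.1, sq_nonneg x.2]
  exact Prod.ext h1 h2

lemma evv_ne_zero (h : ω ^ 2 + ω + 1 = 0) (x : Fin 3 → ℤ × ℤ) (hx : x ≠ 0) : evv ω x ≠ 0 := by
  intro hc
  apply hx
  funext k
  have : evv ω x k = 0 := by rw [hc]; rfl
  exact ev_eq_zero h (x k) this

lemma dot_evv (h : ω ^ 2 + ω + 1 = 0) (u v : Fin 3 → ℤ × ℤ) :
    dotP (evv ω u) (evv ω v) = ev ω (dotZ u v) := by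
  simp [dotP, dotZ, evv, ev_add, ev_mul h]

lemma cross_evv (h : ω ^ 2 + ω + 1 = 0) (u v : Fin 3 → ℤ × ℤ) :
    crossP (evv ω u) (evv ω v) = evv ω (crossZ u v) := by
  funext k
  fin_cases k <;> simp [crossP, crossZ, evv, ev_sub, ev_mul h]

lemma hesse_eq (h : ω ^ 2 + ω + 1 = 0) (i : Fin 4) (j : Fin 3) : hesseLines ω i j = evv ω (LZ i j) := by
  funext k
  fin_cases i <;> fin_cases j <;> fin_cases k <;>
    simp [hesseLines, LZ, evv, ev, Matrix.vecHead, Matrix.vecTail] <;> linear_combination h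

end evlemmas

/-- If p lies on two lines with nonzero cross product, p is the cross product point. -/
lemma point_eq_cross (u w : Fin 3 → ℂ) (hc : crossP u w ≠ 0) (p : P2)
    (h1 : dotP p.rep u = 0) (h2 : dotP p.rep w = 0) :
    p = Projectivization.mk ℂ (crossP u w) hc := by
  set v := p.rep with hvdef
  have hv0 : v ≠ 0 := p.rep_nonzero
  set c := crossP u w with hcdef
  -- the three proportionality identities
  have e01 : c 0 * v 1 = c 1 * v 0 := by
    simp only [hcdef, crossP]
    simp only [Matrix.cons_val_zero, Matrix.cons_val_one, Matrix.head_cons]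
    simp only [dotP] at h1 h2
    linear_combination w 2 * h1 - u 2 * h2
  have e02 : c 0 * v 2 = c 2 * v 0 := by
    simp only [hcdef, crossP]
    simp only [Matrix.cons_val_zero, Matrix.cons_val_one, Matrix.head_cons, Matrix.cons_val_two, Matrix.tail_cons]
    simp only [dotP] at h1 h2
    linear_combination -(w 1) * h1 + u 1 * h2
  have e12 : c 1 * v 2 = c 2 * v 1 := by
    simp only [hcdef, crossP]
    simp only [Matrix.cons_val_zero, Matrix.cons_val_one, Matrix.head_cons, Matrix.cons_val_two, Matrix.tail_cons]
    simp only [dotP] at h1 h2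
    linear_combination w 0 * h1 - u 0 * h2
  -- c ≠ 0 means some component is nonzero
  obtain ⟨k, hk0⟩ := Function.ne_iff.mp hc
  have hk : c k ≠ 0 := by simpa using hk0
  rw [← Projectivization.mk_rep p]
  rw [Projectivization.mk_eq_mk_iff' ℂ _ _ p.rep_nonzero hc]
  refine ⟨v k / c k, ?_⟩
  funext j
  show v k / c k * c j = v j
  rw [div_mul_eq_mul_div, div_eq_iff hk]
  fin_cases k <;> fin_cases j <;> simp_all <;> ring_nf <;>
    first
      | rfl
      | (linear_combination e01) | (linear_combination -e01)
      | (linear_combination e02) | (linear_combination -e02)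
      | (linear_combination e12) | (linear_combination -e12)

lemma mk_eq_implies_cross_zero (u w : Fin 3 → ℂ) (hu : u ≠ 0) (hw : w ≠ 0)
    (heq : Projectivization.mk ℂ u hu = Projectivization.mk ℂ w hw) : crossP u w = 0 := by
  obtain ⟨a, ha⟩ := (Projectivization.mk_eq_mk_iff' ℂ u w hu hw).mp heq
  subst ha
  funext k
  fin_cases k <;> simp [crossP] <;> ring

lemma dec1 : ∀ p q : Fin 4 × Fin 3, crossZ (LZ p.1 p.2) (LZ q.1 q.2) = 0 → p = q := by decide

lemma dec2 : ∀ i j : Fin 4, i ≠ j → ∀ (a b : Fin 3) (m : Fin 4),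
    ∃ c : Fin 3, dotZ (crossZ (LZ i a) (LZ j b)) (LZ m c) = 0 ∧
      ∀ c' : Fin 3, dotZ (crossZ (LZ i a) (LZ j b)) (LZ m c') = 0 → c' = c := by decide

/-- The twelve lines `l_{11}, …, l_{43}` (with `ω` a primitive cube root of unity) form a
`(4,3)`-net in `P²(ℂ)`. -/
theorem stmt15 (ω : ℂ) (hω : IsPrimitiveRoot ω 3)
    (hv : ∀ (i : Fin 4) (j : Fin 3), hesseLines ω i j ≠ 0)
    (ℓ : Fin 4 → Fin 3 → P2)
    (hℓ : ∀ i j, ℓ i j = Projectivization.mk ℂ (hesseLines ω i j) (hv i j)) :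
    IsNetLines ℓ := by
  have h3 : ω ^ 3 = 1 := hω.pow_eq_one
  have h1 : ω ≠ 1 := hω.ne_one (by norm_num)
  have h : ω ^ 2 + ω + 1 = 0 := by
    have hfac : (ω - 1) * (ω ^ 2 + ω + 1) = 0 := by linear_combination h3
    rcases mul_eq_zero.mp hfac with h' | h'
    · exact absurd (sub_eq_zero.mp h') h1
    · exact h'
  constructor
  · rintro ⟨i, a⟩ ⟨j, b⟩ hEq
    simp only [hℓ] at hEq
    have hcz := mk_eq_implies_cross_zero _ _ (hv i a) (hv j b) hEq
    rw [hesse_eq h, hesse_eq h, cross_evv h] at hcz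
    have hz : crossZ (LZ i a) (LZ j b) = 0 := by
      funext k
      exact ev_eq_zero h _ (by rw [show ev ω (crossZ (LZ i a) (LZ j b) k) = evv ω (crossZ (LZ i a) (LZ j b)) k from rfl, hcz]; rfl)
    exact dec1 (i, a) (j, b) hz
  · intro i j hij a b p hpa hpb m
    have hne : ((i, a) : Fin 4 × Fin 3) ≠ (j, b) := fun hc => hij (congrArg Prod.fst hc)
    have key : ∀ (i' : Fin 4) (a' : Fin 3),
        PMem p (ℓ i' a') ↔ dotP p.rep (hesseLines ω i' a') = 0 := by
      intro i' a'
      rw [hℓ]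
      obtain ⟨u, hu⟩ := Projectivization.exists_smul_eq_mk_rep ℂ (hesseLines ω i' a') (hv i' a')
      rw [Units.smul_def] at hu
      unfold PMem
      rw [← hu, dotP_smul_right]
      constructor
      · intro hh
        rcases mul_eq_zero.mp hh with h' | h'
        · exact absurd h' u.ne_zero
        · exact h'
      · intro hh; rw [hh, mul_zero]
    have h1 : dotP p.rep (hesseLines ω i a) = 0 := (key i a).mp hpa
    have h2 : dotP p.rep (hesseLines ω j b) = 0 := (key j b).mp hpb
    have hcne : crossZ (LZ i a) (LZ j b) ≠ 0 := fun hc => hne (dec1 _ _ hc)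
    have hcne' : crossP (hesseLines ω i a) (hesseLines ω j b) ≠ 0 := by
      rw [hesse_eq h, hesse_eq h, cross_evv h]
      exact evv_ne_zero h _ hcne
    have hp := point_eq_cross _ _ hcne' p h1 h2
    have hrep : ∀ c : Fin 3,
        (dotP p.rep (hesseLines ω m c) = 0 ↔ dotZ (crossZ (LZ i a) (LZ j b)) (LZ m c) = 0) := by
      intro c
      obtain ⟨t, ht⟩ := Projectivization.exists_smul_eq_mk_rep ℂ _ hcne'
      rw [Units.smul_def] at ht
      rw [hp, ← ht, dotP_smul_left, hesse_eq h i a, hesse_eq h j b, cross_evv h,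
        hesse_eq h m c, dot_evv h]
      constructor
      · intro hh
        rcases mul_eq_zero.mp hh with h' | h'
        · exact absurd h' t.ne_zero
        · exact ev_eq_zero h _ h'
      · intro hh; rw [hh]; simp [ev]
    obtain ⟨c0, hc0, hc0u⟩ := dec2 i j hij a b m
    refine ⟨c0, ?_, ?_⟩
    · show PMem p (ℓ m c0)
      rw [key m c0, hrep c0]; exact hc0
    · intro c' hc'
      exact hc0u c' ((hrep c').mp ((key m c').mp hc'))
end

section
/- The 5×5 Latin square [[1,2,3,4,5],[2,1,4,5,3],[3,5,1,2,4],[4,3,5,1,2],[5,4,2,3,1]] is not isotopic to the multiplication table of any group; i.e., there are no bijections α, β, γ of {1,…,5} and no group G of order 5 with multiplication table T such that M_{ij} = γ(T_{α(i)β(j)}) for all i, j. -/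
/-- The exceptional 5×5 Latin square
`[[1,2,3,4,5],[2,1,4,5,3],[3,5,1,2,4],[4,3,5,1,2],[5,4,2,3,1]]`, written with symbols
`{0, …, 4} = Fin 5` (via the relabeling `s ↦ s - 1`). -/
def M5 : Fin 5 → Fin 5 → Fin 5 :=
  ![![0,1,2,3,4],![1,0,3,4,2],![2,4,0,1,3],![3,2,4,0,1],![4,3,1,2,0]]

set_option maxRecDepth 40000 in
set_option maxHeartbeats 4000000 in
lemma M5_key' : ∀ v0 v1 v2 v3 v4 : ZMod 5,
    Function.Injective ![v0,v1,v2,v3,v4] →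
    ¬ ∀ i j : Fin 5, ![v0,v1,v2,v3,v4] (M5 i j) + ![v0,v1,v2,v3,v4] (M5 0 0)
        = ![v0,v1,v2,v3,v4] (M5 i 0) + ![v0,v1,v2,v3,v4] (M5 0 j) := by
  decide

lemma M5_key : ∀ g : Fin 5 → ZMod 5, Function.Injective g →
    ¬ ∀ i j : Fin 5, g (M5 i j) + g (M5 0 0) = g (M5 i 0) + g (M5 0 j) := by
  intro g hg h
  have hgeq : g = ![g 0, g 1, g 2, g 3, g 4] := by
    funext i; fin_cases i <;> rfl
  rw [hgeq] at hg h
  exact M5_key' (g 0) (g 1) (g 2) (g 3) (g 4) hg h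

/-- The Latin square `M5` is not isotopic to the multiplication table of any group of
order 5: there are no bijections `α, β, γ` of the symbols and no group `G` of order 5
(with its Cayley table transported to `Fin 5` by a bijection `e`) such that
`M5 i j = γ (e (e.symm (α i) * e.symm (β j)))` for all `i, j`. -/
theorem stmt17 (G : Type) [Group G] [Fintype G] (hG : Fintype.card G = 5) :
    ¬ ∃ (e : G ≃ Fin 5) (α β γ : Equiv.Perm (Fin 5)),
      ∀ i j : Fin 5, M5 i j = γ (e (e.symm (α i) * e.symm (β j))) := by
  rintro ⟨e, α, β, γ, h⟩
  have hcard : Nat.card G = 5 := by simp [Nat.card_eq_fintype_card, hG]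
  have hcyc : IsCyclic G := have : Fact (Nat.Prime 5) := ⟨by norm_num⟩
    isCyclic_of_prime_card (p := 5) hcard
  let φ : Multiplicative (ZMod 5) ≃* G := hcard ▸ zmodCyclicMulEquiv hcyc
  -- the combined symbol relabeling
  let c : ZMod 5 ≃ Fin 5 :=
    (Multiplicative.ofAdd.trans (φ.toEquiv.trans (e.trans (γ : Equiv.Perm (Fin 5)))))
  let a : Fin 5 → ZMod 5 := fun i => Multiplicative.toAdd (φ.symm (e.symm (α i)))
  let b : Fin 5 → ZMod 5 := fun j => Multiplicative.toAdd (φ.symm (e.symm (β j)))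
  have hM : ∀ i j, M5 i j = c (a i + b j) := by
    intro i j
    have := h i j
    simp only [c, a, b, Equiv.trans_apply, MulEquiv.coe_toEquiv, Equiv.coe_toEmbedding]
    rw [this]
    congr 1
    congr 1
    show _ = φ (φ.symm (e.symm (α i)) * φ.symm (e.symm (β j)))
    rw [map_mul, φ.apply_symm_apply, φ.apply_symm_apply]
  have key : ∀ i j : Fin 5, c.symm (M5 i j) + c.symm (M5 0 0)
      = c.symm (M5 i 0) + c.symm (M5 0 j) := by
    intro i j
    rw [hM i j, hM 0 0, hM i 0, hM 0 j]
    simp only [Equiv.symm_apply_apply]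
    ring
  exact M5_key c.symm c.symm.injective key
end
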